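/- arXiv:1210.5881 — 2 statements merged into one kernel-verified Lean document; each statement's English description precedes it below -/
import Mathlib

section
/- For a random interval x (with mid x, spr x ∈ L²) and metric d_θ with θ > 0, the Fréchet variance σ²_x = E[d_θ²(x, E(x))] equals Var(mid x) + θ·Var(spr x), where E(x) is the Aumann expectation [E(mid x) ± E(spr x)]. -/
open MeasureTheory ProbabilityTheory

lemma MeasureTheory.MemLp.integrable_sq_sub_integral {Ω : Type*} [MeasurableSpace Ω]
    {μ : Measure Ω} [IsFiniteMeasure μ] {X : Ω → ℝ} (hX : MemLp X 2 μ) :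
    Integrable (fun ω => (X ω - ∫ ω', X ω' ∂μ) ^ 2) μ :=
  (hX.sub (memLp_const _)).integrable_sq

theorem stmt7_general {Ω : Type*} [MeasurableSpace Ω] (μ : Measure Ω) [IsProbabilityMeasure μ]
    (θ : ℝ)
    (m s : Ω → ℝ)
    (hm : MemLp m 2 μ) (hsL : MemLp s 2 μ) :
    ∫ ω, ((m ω - ∫ ω', m ω' ∂μ) ^ 2 + θ * (s ω - ∫ ω', s ω' ∂μ) ^ 2) ∂μ =
      variance m μ + θ * variance s μ := by
  rw [integral_add hm.integrable_sq_sub_integral (hsL.integrable_sq_sub_integral.const_mul θ),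
    integral_const_mul, variance_eq_integral hm.aemeasurable,
    variance_eq_integral hsL.aemeasurable]

/-- The Fréchet variance of a random interval equals
`Var(mid x) + θ · Var(spr x)`. -/
theorem stmt7 {Ω : Type*} [MeasurableSpace Ω] (μ : Measure Ω) [IsProbabilityMeasure μ]
    (θ : ℝ) (hθ : 0 < θ)
    (m s : Ω → ℝ) (hs : ∀ ω, 0 ≤ s ω)
    (hm : MemLp m 2 μ) (hsL : MemLp s 2 μ) :
    ∫ ω, ((m ω - ∫ ω', m ω' ∂μ) ^ 2 + θ * (s ω - ∫ ω', s ω' ∂μ) ^ 2) ∂μ =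
      variance m μ + θ * variance s μ :=
  stmt7_general μ θ m s hm hsL
end

section
/- For sample data with spr x_i > 0 and |mid x_i| > 0 for all i, the pair (b,c) ∈ [0,∞)² belongs to Γ_G if and only if 0 ≤ b ≤ s₀ and 0 ≤ c ≤ min_k(−u_k b + v_k), where u_k = spr x_k/|mid x_k|, v_k = spr y_k/|mid x_k|, and s₀ = min_i spr y_i / spr x_i; consequently the boundary of Γ_G decomposes as L₁ ∪ L₂ ∪ L₃ as described. -/
open Set Finset

section LinearConstraint

variable {K : Type*} [Field K] [LinearOrder K] [IsStrictOrderedRing K]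

theorem le_neg_div_mul_add_div_iff {p q r b c : K} (hq : 0 < q) :
    c ≤ -(p / q) * b + r / q ↔ b * p + c * q ≤ r := by
  rw [show -(p / q) * b + r / q = (r - b * p) / q by ring, le_div_iff₀ hq]
  constructor <;> intro h <;> linarith

theorem le_div_of_mul_add_le {p r b t : K} (hp : 0 < p) (ht : 0 ≤ t) (h : b * p + t ≤ r) :
    b ≤ r / p :=
  (le_div_iff₀ hp).2 (by linarith)

end LinearConstraint

theorem stmt11_general (n : ℕ) (hn : 0 < n) (midx sprx spry : Fin n → ℝ)
    (hx : ∀ i, 0 < sprx i) (hmx : ∀ i, 0 < |midx i|)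
    (b c : ℝ) :
    have : Nonempty (Fin n) := Fin.pos_iff_nonempty.mp hn
    let u : Fin n → ℝ := fun k => sprx k / |midx k|
    let v : Fin n → ℝ := fun k => spry k / |midx k|
    let s₀ : ℝ := univ.inf' univ_nonempty (fun i => spry i / sprx i)
    ((0 ≤ b ∧ 0 ≤ c ∧ ∀ i, b * sprx i + c * |midx i| ≤ spry i) ↔
      (0 ≤ b ∧ b ≤ s₀ ∧ 0 ≤ c ∧
        c ≤ univ.inf' univ_nonempty (fun k => -u k * b + v k))) := by
  intro _ u v s₀
  have constraint_iff (i : Fin n) : c ≤ -u i * b + v i ↔ b * sprx i + c * |midx i| ≤ spry i :=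
    le_neg_div_mul_add_div_iff (hmx i)
  simp only [s₀, Finset.le_inf'_iff, Finset.mem_univ, forall_const, constraint_iff]
  constructor
  · rintro ⟨hb, hc, h⟩
    exact ⟨hb, fun i => le_div_of_mul_add_le (hx i) (by positivity) (h i), hc, h⟩
  · rintro ⟨hb, -, hc, h⟩
    exact ⟨hb, hc, h⟩

/-- Description of `Γ_G`: `(b,c) ∈ Γ_G` iff `0 ≤ b ≤ s₀` and
`0 ≤ c ≤ min_k (-u_k b + v_k)`. -/
theorem stmt11 (n : ℕ) (hn : 0 < n) (midx sprx spry : Fin n → ℝ)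
    (hx : ∀ i, 0 < sprx i) (hmx : ∀ i, 0 < |midx i|) (hy : ∀ i, 0 ≤ spry i)
    (b c : ℝ) :
    have : Nonempty (Fin n) := Fin.pos_iff_nonempty.mp hn
    let u : Fin n → ℝ := fun k => sprx k / |midx k|
    let v : Fin n → ℝ := fun k => spry k / |midx k|
    let s₀ : ℝ := univ.inf' univ_nonempty (fun i => spry i / sprx i)
    ((0 ≤ b ∧ 0 ≤ c ∧ ∀ i, b * sprx i + c * |midx i| ≤ spry i) ↔
      (0 ≤ b ∧ b ≤ s₀ ∧ 0 ≤ c ∧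
        c ≤ univ.inf' univ_nonempty (fun k => -u k * b + v k))) :=
  stmt11_general n hn midx sprx spry hx hmx b c
end
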